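/- arXiv:1201.3318 — 3 statements merged into one kernel-verified Lean document; each statement's English description precedes it below -/
import Mathlib

section
/- For every integer k ≥ 0, every starting slot s ∈ [[0, 2^k − 1]], every i ∈ [[0, last_{k,s}]], and every l ∈ [[0, l_{k,s,i}]], the set X_{k,s,i,l} satisfies X_{k,s,i,l} = { rev_k(t_{k,s,i} + ⌊2^{l−1}⌋) + 2^{k−l+1} · x' | x' ∈ [[0, ⌈2^{l−1}⌉ − 1]] }, and moreover rev_k(t_{k,s,i} + ⌊2^{l−1}⌋) < 2^{k−l+1}. -/
/-- `revBit k x` is the `k`-bit reversal of `x`: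
if `x = (x_{k-1}, …, x_0)₂` then `revBit k x = (x_0, …, x_{k-1})₂`. -/
def revBit (k x : ℕ) : ℕ := ∑ i ∈ Finset.range k, (x / 2 ^ i % 2) * 2 ^ (k - 1 - i)

/-- `lmax k x = max { l ≤ k | x mod 2^l = 0 }`. -/
def lmax (k x : ℕ) : ℕ := Nat.findGreatest (fun l => x % 2 ^ l = 0) k

/-- The sequence of time slots `t_{k,s,i}`. -/
def tSlot (k s : ℕ) : ℕ → ℕ
  | 0 => s
  | i + 1 => (tSlot k s i + 2 ^ lmax k (tSlot k s i)) % 2 ^ k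

/-- `lVal k s i = l_{k,s,i} = max { l ≤ k | t_{k,s,i} mod 2^l = 0 }`. -/
def lVal (k s i : ℕ) : ℕ := lmax k (tSlot k s i)

/-- `lastIdx k s = min { i ≥ 0 | t_{k,s,i} = 0 }`. -/
noncomputable def lastIdx (k s : ℕ) : ℕ := sInf {i | tSlot k s i = 0}

/-- The segment of time slots `Y_{k,s,i}`: for `i < last` it is
`[[t_{k,s,i}, t_{k,s,i+1} - 1]]` and for `i = last` it is `[[0, 2^k - 1]]`. -/
noncomputable def Yseg (k s i : ℕ) : Set ℕ :=
  if i < lastIdx k s then Set.Icc (tSlot k s i) (tSlot k s (i + 1) - 1)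
  else Set.Icc 0 (2 ^ k - 1)

/-- `Ysub k s i l = Y_{k,s,i,l} = [[t_{k,s,i} + ⌊2^{l-1}⌋, t_{k,s,i} + 2^l - 1]]`
(note `⌊2^{l-1}⌋ = 2^l / 2` for natural `l`). -/
def Ysub (k s i l : ℕ) : Set ℕ :=
  Set.Icc (tSlot k s i + 2 ^ l / 2) (tSlot k s i + 2 ^ l - 1)

/-- `Xsub k s i l = rev_k Y_{k,s,i,l}`. -/
def Xsub (k s i l : ℕ) : Set ℕ := revBit k '' Ysub k s i l

lemma revBit_zero_left (x : ℕ) : revBit 0 x = 0 := by simp [revBit]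

lemma revBit_zero (k : ℕ) : revBit k 0 = 0 := by simp [revBit]

lemma revBit_succ (k x : ℕ) :
    revBit (k + 1) x = x % 2 * 2 ^ k + revBit k (x / 2) := by
  unfold revBit
  rw [Finset.sum_range_succ', add_comm]
  congr 1
  · simp
  · apply Finset.sum_congr rfl
    intro j hj
    have h1 : x / 2 ^ (j + 1) = x / 2 / 2 ^ j := by
      rw [Nat.div_div_eq_div_mul, pow_succ']
    rw [h1]
    congr 2
    omega

lemma revBit_lt (k m x : ℕ) (hm : m ≤ k) (hd : 2 ^ m ∣ x) :
    revBit k x < 2 ^ (k - m) := by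
  induction k generalizing m x with
  | zero =>
    have : m = 0 := by omega
    simp [revBit_zero_left]
  | succ k ih =>
    rw [revBit_succ]
    cases m with
    | zero =>
      have h1 := ih 0 (x / 2) (Nat.zero_le k) (one_dvd _)
      have h3 : x % 2 * 2 ^ k ≤ 1 * 2 ^ k := Nat.mul_le_mul_right _ (by omega)
      simp only [Nat.sub_zero] at h1 ⊢
      rw [pow_succ]
      omega
    | succ m =>
      obtain ⟨c, rfl⟩ := hd
      have he : 2 ^ (m + 1) * c = 2 * (2 ^ m * c) := by ring
      have hx2 : 2 ^ (m + 1) * c % 2 = 0 := by omega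
      have hxd : 2 ^ (m + 1) * c / 2 = 2 ^ m * c := by omega
      rw [hx2, hxd]
      have h1 := ih m (2 ^ m * c) (by omega) (Dvd.intro c rfl)
      have he2 : k + 1 - (m + 1) = k - m := by omega
      rw [he2]
      omega

lemma revBit_lt_pow (k x : ℕ) : revBit k x < 2 ^ k := by
  have := revBit_lt k 0 x (Nat.zero_le k) (one_dvd _)
  simpa using this

lemma revBit_add (k m a b : ℕ) (hm : m ≤ k) (hd : 2 ^ m ∣ a) (hb : b < 2 ^ m) :
    revBit k (a + b) = revBit k a + revBit k b := by
  induction k generalizing m a b with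
  | zero => simp [revBit_zero_left]
  | succ k ih =>
    cases m with
    | zero =>
      have : b = 0 := by omega
      subst this
      simp [revBit_zero]
    | succ m =>
      obtain ⟨c, rfl⟩ := hd
      have he : 2 ^ (m + 1) * c = 2 * (2 ^ m * c) := by ring
      rw [revBit_succ, revBit_succ, revBit_succ]
      have h1 : (2 ^ (m + 1) * c + b) % 2 = b % 2 := by omega
      have h2 : (2 ^ (m + 1) * c + b) / 2 = 2 ^ m * c + b / 2 := by omega
      have h3 : 2 ^ (m + 1) * c % 2 = 0 := by omega
      have h4 : 2 ^ (m + 1) * c / 2 = 2 ^ m * c := by omega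
      have hb' : b / 2 < 2 ^ m := by
        rw [pow_succ] at hb; omega
      rw [h1, h2, h3, h4, ih m (2 ^ m * c) (b / 2) (by omega) (Dvd.intro c rfl) hb']
      ring

lemma revBit_small (m k b : ℕ) (hm : m ≤ k) (hb : b < 2 ^ m) :
    revBit k b = 2 ^ (k - m) * revBit m b := by
  induction m generalizing k b with
  | zero =>
    have : b = 0 := by omega
    subst this
    simp [revBit_zero_left]
    induction k with
    | zero => simp [revBit_zero_left]
    | succ k ihk => rw [revBit_succ]; simpa using ihk
  | succ m ih =>
    obtain ⟨k, rfl⟩ : ∃ k', k = k' + 1 := ⟨k - 1, by omega⟩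
    rw [revBit_succ, revBit_succ]
    have hb' : b / 2 < 2 ^ m := by rw [pow_succ] at hb; omega
    rw [ih k (b / 2) (by omega) hb']
    have he : k + 1 - (m + 1) = k - m := by omega
    rw [he]
    have h2 : 2 ^ (k - m) * 2 ^ m = 2 ^ k := by
      rw [← pow_add]; congr 1; omega
    calc b % 2 * 2 ^ k + 2 ^ (k - m) * revBit m (b / 2)
        = b % 2 * (2 ^ (k - m) * 2 ^ m) + 2 ^ (k - m) * revBit m (b / 2) := by rw [h2]
      _ = 2 ^ (k - m) * (b % 2 * 2 ^ m + revBit m (b / 2)) := by ring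

lemma revBit_high (k c z : ℕ) (hc : c < 2) (hz : z < 2 ^ k) :
    revBit (k + 1) (c * 2 ^ k + z) = c + 2 * revBit k z := by
  induction k generalizing z with
  | zero =>
    have : z = 0 := by omega
    subst this
    rw [revBit_succ]
    simp [revBit_zero_left]
    omega
  | succ k ih =>
    rw [revBit_succ, revBit_succ k z]
    have he : c * 2 ^ (k + 1) = 2 * (c * 2 ^ k) := by ring
    have h1 : (c * 2 ^ (k + 1) + z) % 2 = z % 2 := by omega
    have h2 : (c * 2 ^ (k + 1) + z) / 2 = c * 2 ^ k + z / 2 := by omega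
    have hz' : z / 2 < 2 ^ k := by rw [pow_succ] at hz; omega
    rw [h1, h2, ih (z / 2) hz']
    ring

lemma revBit_revBit (m b : ℕ) (hb : b < 2 ^ m) :
    revBit m (revBit m b) = b := by
  induction m generalizing b with
  | zero =>
    have : b = 0 := by omega
    simp [revBit_zero_left, this]
  | succ m ih =>
    rw [revBit_succ m b]
    have h1 : revBit m (b / 2) < 2 ^ m := revBit_lt_pow m (b / 2)
    rw [revBit_high m (b % 2) (revBit m (b / 2)) (Nat.mod_lt b (by norm_num)) h1,
      ih (b / 2) (by rw [pow_succ] at hb; omega)]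
    omega

/-- Lemma 2 (`X_{i,l}`-Lemma): for `l ∈ [[0, l_{k,s,i}]]`,
`X_{k,s,i,l} = { rev_k(t_{k,s,i} + ⌊2^{l-1}⌋) + 2^{k-l+1} · x' | x' ∈ [[0, ⌈2^{l-1}⌉ - 1]] }`
and `rev_k(t_{k,s,i} + ⌊2^{l-1}⌋) < 2^{k-l+1}`
(note `⌈2^{l-1}⌉ = (2^l + 1) / 2` for natural `l`). -/

theorem stmt_1 (k s i l : ℕ) (hs : s < 2 ^ k) (hi : i ≤ lastIdx k s)
    (hl : l ≤ lVal k s i) :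
    Xsub k s i l =
      {z : ℕ | ∃ x' : ℕ, x' ≤ (2 ^ l + 1) / 2 - 1 ∧
        z = revBit k (tSlot k s i + 2 ^ l / 2) + 2 ^ (k - l + 1) * x'} ∧
    revBit k (tSlot k s i + 2 ^ l / 2) < 2 ^ (k - l + 1) := by
  have hspec : tSlot k s i % 2 ^ lVal k s i = 0 :=
    Nat.findGreatest_spec (P := fun l => tSlot k s i % 2 ^ l = 0) (Nat.zero_le k) (by simp [Nat.mod_one])
  have hdvd : 2 ^ l ∣ tSlot k s i :=
    dvd_trans (pow_dvd_pow 2 hl) (Nat.dvd_of_mod_eq_zero hspec)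
  have hlk : lVal k s i ≤ k := Nat.findGreatest_le k
  set t := tSlot k s i with ht
  cases l with
  | zero =>
    have he1 : (2 : ℕ) ^ 0 / 2 = 0 := by norm_num
    have he2 : ((2 : ℕ) ^ 0 + 1) / 2 - 1 = 0 := by norm_num
    have he3 : k - 0 + 1 = k + 1 := by omega
    rw [he1, he2, he3]
    constructor
    · ext z
      simp only [Xsub, Ysub, he1, Set.mem_image, Set.mem_Icc, Set.mem_setOf_eq]
      constructor
      · rintro ⟨y, ⟨h1, h2⟩, rfl⟩
        have hy : y = t := by norm_num at h1 h2 ⊢; omega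
        exact ⟨0, le_refl 0, by simp [hy]⟩
      · rintro ⟨x', hx', rfl⟩
        have hx0 : x' = 0 := by omega
        exact ⟨t, by norm_num [← ht], by simp [hx0]⟩
    · calc revBit k (t + 0) < 2 ^ k := revBit_lt_pow k (t + 0)
        _ ≤ 2 ^ (k + 1) := Nat.pow_le_pow_right (by norm_num) (Nat.le_succ k)
  | succ m =>
    have hmk : m < k := by omega
    have hp : 0 < (2 : ℕ) ^ m := pow_pos (by norm_num) m
    have hdm : 2 ^ m ∣ t := dvd_trans (pow_dvd_pow 2 (Nat.le_succ m)) hdvd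
    have hda : 2 ^ m ∣ t + 2 ^ m := Dvd.dvd.add hdm dvd_rfl
    have hdiv : (2 : ℕ) ^ (m + 1) / 2 = 2 ^ m := by rw [pow_succ]; omega
    have hceil : ((2 : ℕ) ^ (m + 1) + 1) / 2 - 1 = 2 ^ m - 1 := by rw [pow_succ]; omega
    have hexp : k - (m + 1) + 1 = k - m := by omega
    rw [hdiv, hceil, hexp]
    constructor
    · ext z
      simp only [Xsub, Ysub, hdiv, Set.mem_image, Set.mem_Icc, Set.mem_setOf_eq]
      constructor
      · rintro ⟨y, ⟨h1, h2⟩, rfl⟩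
        have h2' : y ≤ t + 2 ^ m + (2 ^ m - 1) := by rw [pow_succ] at h2; omega
        have hblt : y - (t + 2 ^ m) < 2 ^ m := by omega
        have hy : y = (t + 2 ^ m) + (y - (t + 2 ^ m)) := by omega
        rw [hy, revBit_add k m _ _ (le_of_lt hmk) hda hblt,
          revBit_small m k _ (le_of_lt hmk) hblt]
        exact ⟨revBit m (y - (t + 2 ^ m)),
          by have := revBit_lt_pow m (y - (t + 2 ^ m)); omega, rfl⟩
      · rintro ⟨x', hx', rfl⟩
        have hx'lt : x' < 2 ^ m := by omega
        refine ⟨t + 2 ^ m + revBit m x', ⟨Nat.le_add_right _ _, ?_⟩, ?_⟩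
        · have := revBit_lt_pow m x'
          rw [pow_succ]; omega
        · rw [revBit_add k m _ _ (le_of_lt hmk) hda (revBit_lt_pow m x'),
            revBit_small m k _ (le_of_lt hmk) (revBit_lt_pow m x'),
            revBit_revBit m x' hx'lt]
    · exact revBit_lt k m (t + 2 ^ m) (le_of_lt hmk) hda
end

section
/- For every k ≥ 0, s ∈ [[0, 2^k − 1]], and i ∈ [[0, last_{k,s}]], writing r = rev_k(t_{k,s,i}) and l = l_{k,s,i}: X_{k,s,i,0} = {r}, and for every d ∈ [[1, l]], X_{k,s,i,d} = L_{k−1, d−1}(dsc_k(r, (1))). -/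
/-- `X_{k,s,i,l} = rev_k Y_{k,s,i,l}`, viewed as a set of integers. -/
def XsubZ (k s i l : ℕ) : Set ℤ := (fun y => ((revBit k y : ℕ) : ℤ)) '' Ysub k s i l

/-- `X_{k,s,i} = rev_k Y_{k,s,i}`, viewed as a set of integers. -/
noncomputable def XsegZ (k s i : ℕ) : Set ℤ := (fun y => ((revBit k y : ℕ) : ℤ)) '' Yseg k s i
/-- The descendant `dsc_k(x, c) = x + ∑_{i=1}^{d} 2^{k-i} · c_i` of `x` by the
path `c = (c_1, …, c_d)`, computed via
`dsc_k(x, (c_1, c_2, …, c_d)) = dsc_{k-1}(x + 2^{k-1}·c_1, (c_2, …, c_d))`. -/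
def dsc : ℕ → ℤ → List ℤ → ℤ
  | _, x, [] => x
  | k, x, c :: cs => dsc (k - 1) (x + 2 ^ (k - 1) * c) cs

/-- A path is a sequence over `{-1, 1}`. -/
def IsPath (c : List ℤ) : Prop := ∀ y ∈ c, y = -1 ∨ y = 1

/-- The level at depth `d` rooted at `x`: `L_{k,d}(x) = { dsc_k(x,c) | c ∈ {-1,1}^d }`. -/
def levelSet (k d : ℕ) (x : ℤ) : Set ℤ :=
  {z : ℤ | ∃ c : List ℤ, c.length = d ∧ IsPath c ∧ z = dsc k x c}

/-- The sub-tree of depth `d` rooted at `x`: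
`ST_{k,d}(x) = { dsc_k(x,c) | d' ∈ [[0,d]], c ∈ {-1,1}^{d'} }`. -/
def subTree (k d : ℕ) (x : ℤ) : Set ℤ :=
  {z : ℤ | ∃ c : List ℤ, c.length ≤ d ∧ IsPath c ∧ z = dsc k x c}

namespace Aux

lemma sum_two_pow_reflect (k : ℕ) : ∑ i ∈ Finset.range k, 2 ^ (k - 1 - i) = 2 ^ k - 1 := by
  rw [Finset.sum_range_reflect (fun i => 2 ^ i) k, Nat.geomSum_eq le_rfl k]
  norm_num

lemma revBit_lt (k x : ℕ) : revBit k x < 2 ^ k := by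
  have h1 : revBit k x ≤ ∑ i ∈ Finset.range k, 2 ^ (k - 1 - i) := by
    apply Finset.sum_le_sum
    intro i _
    have : x / 2 ^ i % 2 ≤ 1 := Nat.lt_succ_iff.mp (Nat.mod_lt _ (by norm_num))
    nlinarith [pow_pos (show (0:ℕ) < 2 by norm_num) (k-1-i)]
  calc revBit k x ≤ 2 ^ k - 1 := by rw [← sum_two_pow_reflect]; exact h1
    _ < 2 ^ k := Nat.sub_lt (pow_pos (by norm_num) k) one_pos

lemma revBit_reflect (k x : ℕ) :
    revBit k x = ∑ j ∈ Finset.range k, (x / 2 ^ (k - 1 - j) % 2) * 2 ^ j := by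
  rw [revBit, ← Finset.sum_range_reflect (fun j => (x / 2 ^ (k - 1 - j) % 2) * 2 ^ j) k]
  apply Finset.sum_congr rfl
  intro i hi
  rw [Finset.mem_range] at hi
  have h : k - 1 - (k - 1 - i) = i := by omega
  rw [h]

lemma sum_split (n : ℕ) (g : ℕ → ℕ) :
    ∑ j ∈ Finset.range (n + 1), g j * 2 ^ j
      = g 0 + 2 * ∑ j ∈ Finset.range n, g (j + 1) * 2 ^ j := by
  rw [Finset.sum_range_succ' (fun j => g j * 2 ^ j) n]
  simp only [pow_zero, mul_one, pow_succ]
  rw [add_comm, Finset.mul_sum]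
  congr 1
  apply Finset.sum_congr rfl
  intro i _
  ring

lemma bit_sum : ∀ j0 k : ℕ, ∀ g : ℕ → ℕ, (∀ j, j < k → g j ≤ 1) → j0 < k →
    (∑ j ∈ Finset.range k, g j * 2 ^ j) / 2 ^ j0 % 2 = g j0 := by
  intro j0
  induction j0 with
  | zero =>
    intro k g hg hk
    obtain ⟨n, rfl⟩ : ∃ n, k = n + 1 := ⟨k - 1, by omega⟩
    rw [sum_split]
    have h0 := hg 0 (by omega)
    simp only [pow_zero, Nat.div_one]
    omega
  | succ j ih =>
    intro k g hg hk
    obtain ⟨n, rfl⟩ : ∃ n, k = n + 1 := ⟨k - 1, by omega⟩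
    rw [sum_split]
    have h0 := hg 0 (by omega)
    have key := ih n (fun j => g (j + 1)) (fun j' hj' => hg (j' + 1) (by omega)) (by omega)
    have h2 : (g 0 + 2 * ∑ j ∈ Finset.range n, g (j + 1) * 2 ^ j) / 2
        = ∑ j ∈ Finset.range n, g (j + 1) * 2 ^ j := by omega
    rw [pow_succ', ← Nat.div_div_eq_div_mul, h2]
    exact key

lemma sum_bits_lt (k : ℕ) (g : ℕ → ℕ) (hg : ∀ j, j < k → g j ≤ 1) :
    ∑ j ∈ Finset.range k, g j * 2 ^ j < 2 ^ k := by
  have h1 : ∑ j ∈ Finset.range k, g j * 2 ^ j ≤ ∑ j ∈ Finset.range k, 2 ^ j := by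
    apply Finset.sum_le_sum
    intro i hi
    rw [Finset.mem_range] at hi
    nlinarith [hg i hi, pow_pos (show (0:ℕ) < 2 by norm_num) i]
  have h2 : ∑ j ∈ Finset.range k, 2 ^ j = 2 ^ k - 1 := by
    rw [Nat.geomSum_eq le_rfl k]; norm_num
  have : (0:ℕ) < 2 ^ k := pow_pos (by norm_num) k
  omega

lemma bits_recompose : ∀ k x : ℕ, x < 2 ^ k →
    ∑ i ∈ Finset.range k, (x / 2 ^ i % 2) * 2 ^ i = x := by
  intro k
  induction k with
  | zero => intro x hx; interval_cases x; simp
  | succ n ih =>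
    intro x hx
    rw [Finset.sum_range_succ]
    have h1 : ∀ i ∈ Finset.range n, x / 2 ^ i % 2 * 2 ^ i = (x % 2 ^ n) / 2 ^ i % 2 * 2 ^ i := by
      intro i hi
      rw [Finset.mem_range] at hi
      have h2 : x % 2 ^ n / 2 ^ i = x / 2 ^ i % 2 ^ (n - i) := by
        rw [← Nat.mod_mul_right_div_self, ← pow_add]
        have he : i + (n - i) = n := by omega
        rw [he]
      rw [h2, Nat.mod_mod_of_dvd _ (dvd_pow_self 2 (show n - i ≠ 0 by omega))]
    rw [Finset.sum_congr rfl h1, ih (x % 2 ^ n) (Nat.mod_lt _ (by positivity))]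
    have h3 : x / 2 ^ n < 2 := by
      rw [Nat.div_lt_iff_lt_mul (by positivity)]
      rw [pow_succ] at hx
      omega
    rw [Nat.mod_eq_of_lt h3, add_comm, mul_comm]
    exact Nat.div_add_mod x (2 ^ n)

lemma revBit_revBit (k x : ℕ) (h : x < 2 ^ k) : revBit k (revBit k x) = x := by
  conv_lhs => rw [revBit_reflect k x]
  rw [revBit]
  have hbit : ∀ i, i < k →
      (∑ j ∈ Finset.range k, (x / 2 ^ (k - 1 - j) % 2) * 2 ^ j) / 2 ^ i % 2
        = x / 2 ^ (k - 1 - i) % 2 := by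
    intro i hi
    exact bit_sum i k (fun j => x / 2 ^ (k - 1 - j) % 2)
      (fun j _ => Nat.lt_succ_iff.mp (Nat.mod_lt _ (by norm_num))) hi
  calc ∑ i ∈ Finset.range k,
        ((∑ j ∈ Finset.range k, (x / 2 ^ (k - 1 - j) % 2) * 2 ^ j) / 2 ^ i % 2) * 2 ^ (k - 1 - i)
      = ∑ i ∈ Finset.range k, (x / 2 ^ (k - 1 - i) % 2) * 2 ^ (k - 1 - i) := by
        apply Finset.sum_congr rfl
        intro i hi
        rw [Finset.mem_range] at hi
        rw [hbit i hi]
    _ = ∑ i ∈ Finset.range k, (x / 2 ^ i % 2) * 2 ^ i :=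
        Finset.sum_range_reflect (fun i => (x / 2 ^ i % 2) * 2 ^ i) k
    _ = x := bits_recompose k x h


lemma revBit_add (k c t m : ℕ) (hc : c ≤ k) (ht : 2 ^ c ∣ t) (hm : m < 2 ^ c) :
    revBit k (t + m) = revBit k t + revBit k m := by
  rw [revBit, revBit, revBit, ← Finset.sum_add_distrib]
  apply Finset.sum_congr rfl
  intro i _
  rw [← add_mul]
  congr 1
  by_cases hic : i < c
  · have h1 : 2 ^ (i + 1) ∣ t := dvd_trans (pow_dvd_pow 2 (by omega)) ht
    have h2 : 2 ^ i ∣ t := dvd_trans (pow_dvd_pow 2 (by omega)) ht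
    obtain ⟨q, hq⟩ := h2
    have hq2 : q % 2 = 0 := by
      obtain ⟨q', hq'⟩ := h1
      have heq : 2 ^ i * q = 2 ^ i * (2 * q') := by
        rw [← hq, hq', pow_succ]; ring
      have : q = 2 * q' := Nat.eq_of_mul_eq_mul_left (pow_pos (by norm_num) _) heq
      omega
    subst hq
    rw [Nat.mul_add_div (pow_pos (by norm_num) _),
      Nat.mul_div_cancel_left _ (pow_pos (by norm_num) _)]
    omega
  · have h3 : m / 2 ^ i = 0 :=
      Nat.div_eq_of_lt (lt_of_lt_of_le hm (pow_le_pow_right₀ (by norm_num) (by omega)))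
    obtain ⟨q, hq⟩ := ht
    have h4 : (t + m) / 2 ^ i = t / 2 ^ i := by
      subst hq
      have hsplit : (2:ℕ) ^ i = 2 ^ c * 2 ^ (i - c) := by rw [← pow_add]; congr 1; omega
      rw [hsplit, ← Nat.div_div_eq_div_mul, ← Nat.div_div_eq_div_mul,
        Nat.mul_add_div (pow_pos (by norm_num) _),
        Nat.div_eq_of_lt hm, Nat.mul_div_cancel_left _ (pow_pos (by norm_num) _),
        add_zero]
    rw [h4, h3]
    simp

lemma revBit_two_pow (k d : ℕ) (h1 : 1 ≤ d) (h2 : d ≤ k) :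
    revBit k (2 ^ (d - 1)) = 2 ^ (k - d) := by
  rw [revBit, Finset.sum_eq_single (d - 1)]
  · rw [Nat.div_self (pow_pos (by norm_num) _)]
    have : k - 1 - (d - 1) = k - d := by omega
    rw [this]
    norm_num
  · intro i hi hne
    rw [Finset.mem_range] at hi
    rcases lt_or_gt_of_ne hne with h | h
    · have he : (2:ℕ) ^ (d - 1) / 2 ^ i = 2 ^ (d - 1 - i) := by
        rw [Nat.pow_div (by omega) (by norm_num)]
      rw [he]
      have hm : (2:ℕ) ^ (d - 1 - i) % 2 = 0 := by
        have : (2:ℕ) ^ (d - 1 - i) = 2 * 2 ^ (d - 1 - i - 1) := by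
          rw [← pow_succ']; congr 1; omega
        omega
      rw [hm]
      simp
    · rw [Nat.div_eq_of_lt (Nat.pow_lt_pow_right (by norm_num) h)]
      simp
  · intro h
    exfalso
    exact h (Finset.mem_range.mpr (by omega))

lemma revBit_shift (k d j : ℕ) (h1 : 1 ≤ d) (h2 : d ≤ k) (hj : j < 2 ^ (d - 1)) :
    revBit k j = 2 ^ (k - d + 1) * revBit (d - 1) j := by
  have hz : ∀ x ∈ Finset.range k, x ∉ Finset.range (d - 1) →
      (j / 2 ^ x % 2) * 2 ^ (k - 1 - x) = 0 := by
    intro x hx hxn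
    rw [Finset.mem_range] at hx hxn
    push_neg at hxn
    rw [Nat.div_eq_of_lt (lt_of_lt_of_le hj (pow_le_pow_right₀ (by norm_num) hxn))]
    simp
  rw [revBit, revBit, Finset.mul_sum,
    ← Finset.sum_subset (Finset.range_subset_range.mpr (show d - 1 ≤ k by omega)) hz]
  apply Finset.sum_congr rfl
  intro i hi
  rw [Finset.mem_range] at hi
  have he : k - 1 - i = (k - d + 1) + (d - 1 - 1 - i) := by omega
  rw [he, pow_add]
  ring

lemma revBit_step (k d t j : ℕ) (h1 : 1 ≤ d) (h2 : d ≤ k) (ht : 2 ^ d ∣ t)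
    (hj : j < 2 ^ (d - 1)) :
    revBit k (t + (2 ^ (d - 1) + j))
      = revBit k t + (2 ^ (k - d) + 2 ^ (k - d + 1) * revBit (d - 1) j) := by
  have hm : 2 ^ (d - 1) + j < 2 ^ d := by
    have : (2:ℕ) ^ d = 2 ^ (d - 1) * 2 := by rw [← pow_succ]; congr 1; omega
    omega
  rw [revBit_add k d t _ h2 ht hm,
    revBit_add k (d - 1) (2 ^ (d - 1)) j (by omega) dvd_rfl hj,
    revBit_two_pow k d h1 h2, revBit_shift k d j h1 h2 hj]

end Aux

namespace Aux

lemma levelSet_char (u : ℕ) : ∀ (e : ℕ) (x : ℤ),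
    levelSet (e + u) e x
      = {z : ℤ | ∃ a : ℕ, a < 2 ^ e ∧
          z = x - 2 ^ (e + u) + 2 ^ u + 2 ^ (u + 1) * a} := by
  intro e
  induction e with
  | zero =>
    intro x
    ext z
    simp only [levelSet, Set.mem_setOf_eq, pow_zero, zero_add]
    constructor
    · rintro ⟨c, hlen, -, rfl⟩
      rw [List.length_eq_zero_iff.mp hlen]
      exact ⟨0, by norm_num, by simp [dsc]⟩
    · rintro ⟨a, ha, rfl⟩
      refine ⟨[], rfl, fun y hy => by simp at hy, ?_⟩
      interval_cases a
      simp [dsc]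
  | succ e ih =>
    intro x
    have hred : e + 1 + u - 1 = e + u := by omega
    have hsplit : levelSet (e + 1 + u) (e + 1) x
        = levelSet (e + u) e (x - 2 ^ (e + u)) ∪ levelSet (e + u) e (x + 2 ^ (e + u)) := by
      ext z
      constructor
      · rintro ⟨c, hlen, hpath, rfl⟩
        match c with
        | [] => simp at hlen
        | c₀ :: cs =>
          have hc₀ := hpath c₀ (by simp)
          have hcs : IsPath cs := fun y hy => hpath y (by simp [hy])
          have hlen' : cs.length = e := by simpa using hlen
          have hbm : x + 2 ^ (e + u) * (-1 : ℤ) = x - 2 ^ (e + u) := by ring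
          have hbp : x + 2 ^ (e + u) * (1 : ℤ) = x + 2 ^ (e + u) := by ring
          rcases hc₀ with h | h
          · left
            refine ⟨cs, hlen', hcs, ?_⟩
            show dsc (e + 1 + u) x (c₀ :: cs) = _
            rw [dsc, hred, h, hbm]
          · right
            refine ⟨cs, hlen', hcs, ?_⟩
            show dsc (e + 1 + u) x (c₀ :: cs) = _
            rw [dsc, hred, h, hbp]
      · rintro (⟨cs, hlen, hcs, rfl⟩ | ⟨cs, hlen, hcs, rfl⟩)
        · refine ⟨-1 :: cs, by simp [hlen], ?_, ?_⟩
          · intro y hy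
            rcases List.mem_cons.mp hy with h | h
            · left; exact h
            · exact hcs y h
          · have hbm : x + 2 ^ (e + u) * (-1 : ℤ) = x - 2 ^ (e + u) := by ring
            rw [dsc, hred, hbm]
        · refine ⟨1 :: cs, by simp [hlen], ?_, ?_⟩
          · intro y hy
            rcases List.mem_cons.mp hy with h | h
            · right; exact h
            · exact hcs y h
          · have hbp : x + 2 ^ (e + u) * (1 : ℤ) = x + 2 ^ (e + u) := by ring
            rw [dsc, hred, hbp]
    rw [hsplit, ih, ih]
    ext z
    simp only [Set.mem_union, Set.mem_setOf_eq]
    constructor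
    · rintro (⟨a, ha, rfl⟩ | ⟨a, ha, rfl⟩)
      · have h1 : a < 2 ^ (e + 1) :=
          lt_of_lt_of_le ha (Nat.pow_le_pow_right (by norm_num) (by omega))
        exact ⟨a, h1, by ring⟩
      · have h1 : a + 2 ^ e < 2 ^ (e + 1) := by
          have := pow_succ 2 e
          omega
        refine ⟨a + 2 ^ e, h1, ?_⟩
        push_cast
        ring
    · rintro ⟨a, ha, rfl⟩
      by_cases hc : a < 2 ^ e
      · exact Or.inl ⟨a, hc, by ring⟩
      · have h2 : a - 2 ^ e < 2 ^ e := by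
          have := pow_succ 2 e
          omega
        refine Or.inr ⟨a - 2 ^ e, h2, ?_⟩
        push_cast [Nat.cast_sub (by omega : 2 ^ e ≤ a)]
        ring

end Aux


namespace Aux

lemma tSlot_lt (k s : ℕ) (hs : s < 2 ^ k) (i : ℕ) : tSlot k s i < 2 ^ k := by
  cases i with
  | zero => simpa [tSlot] using hs
  | succ n =>
    show (tSlot k s n + 2 ^ lmax k (tSlot k s n)) % 2 ^ k < 2 ^ k
    exact Nat.mod_lt _ (pow_pos (by norm_num) _)

end Aux

/-- Lemma (X-BST, part c): writing `r = rev_k(t_{k,s,i})` and `l = l_{k,s,i}`,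
we have `X_{k,s,i,0} = {r}` and, for `d ∈ [[1, l]]`,
`X_{k,s,i,d} = L_{k-1, d-1}(dsc_k(r, (1)))`. -/
theorem stmt_15 (k s i : ℕ) (hs : s < 2 ^ k) (hi : i ≤ lastIdx k s) :
    XsubZ k s i 0 = {((revBit k (tSlot k s i) : ℕ) : ℤ)} ∧
    ∀ d : ℕ, 1 ≤ d → d ≤ lVal k s i →
      XsubZ k s i d =
        levelSet (k - 1) (d - 1) (dsc k ((revBit k (tSlot k s i) : ℕ) : ℤ) [1]) := by
  constructor
  · have e1 : tSlot k s i + 2 ^ 0 / 2 = tSlot k s i := by norm_num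
    have e2 : tSlot k s i + 2 ^ 0 - 1 = tSlot k s i := by omega
    have h0 : Ysub k s i 0 = {tSlot k s i} := by
      rw [Ysub, e1, e2, Set.Icc_self]
    rw [XsubZ, h0, Set.image_singleton]
  · intro d hd1 hdl
    have hl_le : lVal k s i ≤ k := by
      unfold lVal lmax
      exact Nat.findGreatest_le k
    have hdk : d ≤ k := le_trans hdl hl_le
    have hk1 : 1 ≤ k := le_trans hd1 hdk
    have ht_lt : tSlot k s i < 2 ^ k := Aux.tSlot_lt k s hs i
    have ht_mod : tSlot k s i % 2 ^ lVal k s i = 0 := by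
      unfold lVal lmax
      exact Nat.findGreatest_spec (P := fun l => tSlot k s i % 2 ^ l = 0) (Nat.zero_le k) (by omega)
    have htd : 2 ^ d ∣ tSlot k s i :=
      dvd_trans (pow_dvd_pow 2 hdl) (Nat.dvd_of_mod_eq_zero ht_mod)
    have hdsc : dsc k ((revBit k (tSlot k s i) : ℕ) : ℤ) [1]
        = ((revBit k (tSlot k s i) : ℕ) : ℤ) + 2 ^ (k - 1) := by
      show dsc (k - 1) (_ + 2 ^ (k - 1) * 1) [] = _
      rw [dsc, mul_one]
    rw [hdsc]
    have hk1' : k - 1 = (d - 1) + (k - d) := by omega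
    rw [hk1', Aux.levelSet_char (k - d) (d - 1) _]
    ext z
    simp only [XsubZ, Set.mem_image, Set.mem_setOf_eq]
    have hpow : (2:ℕ) ^ d = 2 ^ (d - 1) + 2 ^ (d - 1) := by
      have : (2:ℕ) ^ d = 2 * 2 ^ (d - 1) := by
        rw [← pow_succ']
        congr 1
        omega
      omega
    have hhalf : (2:ℕ) ^ d / 2 = 2 ^ (d - 1) := by omega
    have hppos : 0 < (2:ℕ) ^ (d - 1) := pow_pos (by norm_num) _
    constructor
    · rintro ⟨y, hy, rfl⟩
      rw [Ysub, Set.mem_Icc, hhalf] at hy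
      have hjlt : y - tSlot k s i - 2 ^ (d - 1) < 2 ^ (d - 1) := by omega
      have hy' : y = tSlot k s i + (2 ^ (d - 1) + (y - tSlot k s i - 2 ^ (d - 1))) := by
        omega
      rw [hy', Aux.revBit_step k d _ _ hd1 hdk htd hjlt]
      refine ⟨revBit (d - 1) (y - tSlot k s i - 2 ^ (d - 1)), Aux.revBit_lt _ _, ?_⟩
      push_cast
      ring
    · rintro ⟨a, ha, rfl⟩
      have hjlt : revBit (d - 1) a < 2 ^ (d - 1) := Aux.revBit_lt _ _
      refine ⟨tSlot k s i + (2 ^ (d - 1) + revBit (d - 1) a), ?_, ?_⟩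
      · rw [Ysub, Set.mem_Icc, hhalf]
        omega
      · rw [Aux.revBit_step k d _ _ hd1 hdk htd hjlt, Aux.revBit_revBit (d - 1) a ha]
        push_cast
        ring
end

section
/- For every k ≥ 0, every d ∈ [[0, k]], and every integer x: the sub-tree of depth d rooted at x satisfies ST_{k,d}(x) = { x + i · 2^{k−d} | i ∈ [[−2^d + 1, 2^d − 1]] }. -/
/-- Lemma (BST properties, part d): for `d ∈ [[0, k]]`,
`ST_{k,d}(x) = { x + i · 2^{k-d} | i ∈ [[-2^d + 1, 2^d - 1]] }`. -/
theorem stmt_17 (k d : ℕ) (hd : d ≤ k) (x : ℤ) :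
    subTree k d x =
      {z : ℤ | ∃ i : ℤ, -(2 ^ d) + 1 ≤ i ∧ i ≤ 2 ^ d - 1 ∧
        z = x + i * 2 ^ (k - d)} := by
  induction d generalizing k x with
  | zero =>
    ext z
    constructor
    · rintro ⟨c, hlen, -, rfl⟩
      have : c = [] := List.length_eq_zero_iff.mp (by omega)
      exact ⟨0, by norm_num, by norm_num, by simp [dsc, this]⟩
    · rintro ⟨i, h1, h2, rfl⟩
      have : i = 0 := by omega
      exact ⟨[], by simp, by simp [IsPath], by simp [dsc, this]⟩
  | succ d ih =>
    have hdk : d ≤ k - 1 := by omega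
    have hk1 : k - 1 - d = k - (d + 1) := by omega
    have hpow : (2 : ℤ) ^ (k - 1) = 2 ^ d * 2 ^ (k - (d + 1)) := by
      rw [← pow_add]; congr 1; omega
    ext z
    have hmem : z ∈ subTree k (d + 1) x ↔
        z = x ∨ z ∈ subTree (k - 1) d (x + 2 ^ (k - 1) * (-1))
          ∨ z ∈ subTree (k - 1) d (x + 2 ^ (k - 1) * 1) := by
      constructor
      · rintro ⟨c, hlen, hpath, rfl⟩
        match c with
        | [] => exact Or.inl rfl
        | a :: cs =>
          rcases hpath a (by simp) with ha | ha
          · refine Or.inr (Or.inl ⟨cs, by simpa using hlen,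
              fun y hy => hpath y (by simp [hy]), ?_⟩)
            simp [dsc, ha]
          · refine Or.inr (Or.inr ⟨cs, by simpa using hlen,
              fun y hy => hpath y (by simp [hy]), ?_⟩)
            simp [dsc, ha]
      · rintro (rfl | ⟨c, hlen, hpath, rfl⟩ | ⟨c, hlen, hpath, rfl⟩)
        · exact ⟨[], by simp, by simp [IsPath], by simp [dsc]⟩
        · exact ⟨(-1) :: c, by simpa using hlen,
            fun y hy => by rcases List.mem_cons.mp hy with rfl | hy
                           · exact Or.inl rfl
                           · exact hpath y hy,
            by simp [dsc]⟩
        · exact ⟨1 :: c, by simpa using hlen,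
            fun y hy => by rcases List.mem_cons.mp hy with rfl | hy
                           · exact Or.inr rfl
                           · exact hpath y hy,
            by simp [dsc]⟩
    rw [Set.mem_setOf_eq] at *
    rw [hmem, ih (k - 1) hdk, ih (k - 1) hdk]
    simp only [Set.mem_setOf_eq, hk1]
    constructor
    · rintro (rfl | ⟨j, h1, h2, rfl⟩ | ⟨j, h1, h2, rfl⟩)
      · have : (0:ℤ) < 2 ^ (d+1) := by positivity
        exact ⟨0, by omega, by omega, by ring⟩
      · refine ⟨j - 2 ^ d, ?_, ?_, by rw [hpow]; ring⟩
        · have : (2:ℤ) ^ (d+1) = 2 * 2 ^ d := by ring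
          omega
        · have : (0:ℤ) < 2 ^ d := by positivity
          have h2' : (2:ℤ) ^ (d+1) = 2 * 2 ^ d := by ring
          omega
      · refine ⟨j + 2 ^ d, ?_, ?_, by rw [hpow]; ring⟩
        · have : (0:ℤ) < 2 ^ d := by positivity
          have h2' : (2:ℤ) ^ (d+1) = 2 * 2 ^ d := by ring
          omega
        · have h2' : (2:ℤ) ^ (d+1) = 2 * 2 ^ d := by ring
          omega
    · rintro ⟨i, h1, h2, rfl⟩
      have h2' : (2:ℤ) ^ (d+1) = 2 * 2 ^ d := by ring
      rcases lt_trichotomy i 0 with hi | hi | hi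
      · refine Or.inr (Or.inl ⟨i + 2 ^ d, by omega, by omega, by rw [hpow]; ring⟩)
      · exact Or.inl (by rw [hi]; ring)
      · refine Or.inr (Or.inr ⟨i - 2 ^ d, by omega, by omega, by rw [hpow]; ring⟩)
end
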